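/- arXiv:2109.03349 — 5 statements merged into one kernel-verified Lean document; each statement's English description precedes it below -/
import Mathlib

section
/- Let X be a nonempty set, N a natural number, f : Fin N → X → ℝ a family of functions, and ψ : X → ℝ. Then the infimum over x ∈ X of Σ_{i} min(f_i(x), 1) + ψ(x) equals the infimum over pairs (x, θ) with x ∈ X and θ : Fin N → ℝ satisfying θ_i ∈ {−1,+1} for all i, of Σ_{i} [ ((1+θ_i)/2)·f_i(x) + (1−θ_i)/2 ] + ψ(x). -/
/-- Reformulation of truncated least squares (TLS) robust estimation as a
polynomial optimization problem: the infimum over `x ∈ X` of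
`Σ_i min(f_i(x), 1) + ψ(x)` equals the infimum over pairs `(x, θ)` with
`θ_i ∈ {−1, +1}` of `Σ_i [((1+θ_i)/2)·f_i(x) + (1−θ_i)/2] + ψ(x)`. -/
theorem tls_pop_reformulation (X : Type*) [Nonempty X] (N : ℕ)
    (f : Fin N → X → ℝ) (ψ : X → ℝ) :
    sInf {y : ℝ | ∃ x : X, y = (∑ i : Fin N, min (f i x) 1) + ψ x} =
    sInf {y : ℝ | ∃ (x : X) (θ : Fin N → ℝ), (∀ i, θ i = -1 ∨ θ i = 1) ∧
      y = (∑ i : Fin N, ((1 + θ i) / 2 * f i x + (1 - θ i) / 2)) + ψ x} := by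
  set A := {y : ℝ | ∃ x : X, y = (∑ i : Fin N, min (f i x) 1) + ψ x} with hA
  set B := {y : ℝ | ∃ (x : X) (θ : Fin N → ℝ), (∀ i, θ i = -1 ∨ θ i = 1) ∧
      y = (∑ i : Fin N, ((1 + θ i) / 2 * f i x + (1 - θ i) / 2)) + ψ x} with hB
  have hAB : A ⊆ B := by
    rintro y ⟨x, rfl⟩
    refine ⟨x, fun i => if f i x ≤ 1 then 1 else -1, fun i => by dsimp only; split <;> simp, ?_⟩
    congr 1
    refine Finset.sum_congr rfl fun i _ => ?_
    by_cases h : f i x ≤ 1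
    · rw [min_eq_left h]; simp [h]
    · rw [min_eq_right (le_of_not_ge h)]; simp [h]
  have hdom : ∀ b ∈ B, ∃ a ∈ A, a ≤ b := by
    rintro b ⟨x, θ, hθ, rfl⟩
    refine ⟨_, ⟨x, rfl⟩, ?_⟩
    gcongr with i _
    rcases hθ i with h | h
    · simp [h]
    · simp [h]
  have hAne : A.Nonempty := ⟨_, Classical.arbitrary X, rfl⟩
  have hBne : B.Nonempty := hAne.mono hAB
  by_cases hbdd : BddBelow A
  · have hbddB : BddBelow B := by
      obtain ⟨c, hc⟩ := hbdd
      exact ⟨c, fun b hb => by obtain ⟨a, ha, hab⟩ := hdom b hb; exact (hc ha).trans hab⟩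
    refine le_antisymm ?_ (csInf_le_csInf hbddB hAne hAB)
    refine le_csInf hBne fun b hb => ?_
    obtain ⟨a, ha, hab⟩ := hdom b hb
    exact (csInf_le hbdd ha).trans hab
  · have hbddB : ¬ BddBelow B := fun h => hbdd (h.mono hAB)
    rw [Real.sInf_of_not_bddBelow hbdd, Real.sInf_of_not_bddBelow hbddB]
end

section
/- For every real number a ≥ 0, the least element of the set { θ²·a + 1/3 − θ² + (2/3)·θ³ : θ ∈ [0,1] } equals a − a² + a³/3 if a ≤ 1, and equals 1/3 if a > 1. -/
/-- Black–Rangarajan duality for Tukey's Biweight cost: for `a ≥ 0`, the least element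
of `{ θ²·a + 1/3 − θ² + (2/3)·θ³ : θ ∈ [0,1] }` equals `a − a² + a³/3` if `a ≤ 1`,
and `1/3` otherwise. -/
theorem tb_eq_least_over_unit_interval (a : ℝ) (ha : a ≥ 0) :
    IsLeast {v : ℝ | ∃ θ ∈ Set.Icc (0 : ℝ) 1,
        v = θ ^ 2 * a + 1 / 3 - θ ^ 2 + 2 / 3 * θ ^ 3}
      (if a ≤ 1 then a - a ^ 2 + a ^ 3 / 3 else 1 / 3) := by
  constructor
  · split_ifs with h
    · exact ⟨1 - a, ⟨by linarith, by linarith⟩, by ring⟩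
    · exact ⟨0, ⟨le_refl 0, zero_le_one⟩, by ring⟩
  · rintro v ⟨θ, ⟨h0, h1⟩, rfl⟩
    split_ifs with h
    · nlinarith [sq_nonneg (θ - (1 - a)), mul_nonneg (sq_nonneg (θ - (1 - a))) (by linarith : 2 * θ + (1 - a) ≥ 0)]
    · nlinarith [sq_nonneg θ, mul_nonneg (mul_nonneg h0 h0) h0]
end

section
/- Let r ∈ ℝ and β > 0. The value (r²/(2β²) if |r| ≤ β, and |r|/β − 1/2 otherwise) is the least element of the set { ((1+θ)/2)·γ²/(2β²) + ((1−θ)/2)·(γ/β − 1/2) : θ ∈ {−1,+1}, γ ∈ ℝ, γ ≥ 0, γ² = r², θ·(γ − β) ≤ 0 }. -/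
/-- The Huber cost `ρ_HB(r,β)` (`r²/(2β²)` if `|r| ≤ β`, else `|r|/β − 1/2`) is the least
element of the constrained set obtained by introducing a slack variable `γ = |r|` and a
binary variable `θ ∈ {−1,+1}` with `θ(γ−β) ≤ 0`. -/
theorem huber_eq_least_binary_constrained (r β : ℝ) (hβ : β > 0) :
    IsLeast {v : ℝ | ∃ θ γ : ℝ, (θ = -1 ∨ θ = 1) ∧ γ ≥ 0 ∧ γ ^ 2 = r ^ 2 ∧
        θ * (γ - β) ≤ 0 ∧
        v = (1 + θ) / 2 * (γ ^ 2 / (2 * β ^ 2)) + (1 - θ) / 2 * (γ / β - 1 / 2)}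
      (if |r| ≤ β then r ^ 2 / (2 * β ^ 2) else |r| / β - 1 / 2) := by
  constructor
  · by_cases h : |r| ≤ β
    · refine ⟨1, |r|, Or.inr rfl, abs_nonneg r, sq_abs r, by linarith, ?_⟩
      rw [if_pos h, sq_abs]; ring
    · refine ⟨-1, |r|, Or.inl rfl, abs_nonneg r, sq_abs r, by nlinarith [abs_nonneg r], ?_⟩
      rw [if_neg h]; ring
  · rintro v ⟨θ, γ, hθ, hγ0, hγ2, hc, rfl⟩
    have hγ : γ = |r| := by
      have h1 : γ ^ 2 = |r| ^ 2 := by rw [hγ2, sq_abs]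
      nlinarith [abs_nonneg r, sq_nonneg (γ - |r|), sq_nonneg (γ + |r|)]
    rcases hθ with rfl | rfl
    · -- θ = -1 : γ ≥ β
      have hγβ : γ ≥ β := by nlinarith
      split_ifs with h
      · -- |r| ≤ β so γ = β
        have hβγ : γ = β := le_antisymm (hγ ▸ h) hγβ
        have : r ^ 2 ≤ β ^ 2 := by nlinarith [abs_nonneg r, sq_abs r]
        have h2 : r ^ 2 / (2 * β ^ 2) ≤ β ^ 2 / (2 * β ^ 2) := by gcongr
        have h3 : β ^ 2 / (2 * β ^ 2) = 1 / 2 := by field_simp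
        rw [h3] at h2
        have hb : β / β = 1 := div_self hβ.ne'
        rw [hβγ, hb]
        nlinarith [h2]
      · rw [hγ]; ring_nf; exact le_rfl
    · -- θ = 1 : γ ≤ β
      have hγβ : γ ≤ β := by nlinarith
      split_ifs with h
      · rw [hγ2]; linarith [le_refl (r ^ 2 / (2 * β ^ 2))]
      · exact absurd (hγ ▸ hγβ) h
end

section
/- Let n ≥ 1 and m be natural numbers, C and A₁,…,A_m real symmetric n×n matrices, b ∈ ℝᵐ, and M ≥ 0. Then for every y ∈ ℝᵐ and every positive semidefinite n×n matrix X satisfying ⟨A_j, X⟩ = b_j for all j and trace(X) ≤ M, one has ⟨C, X⟩ ≥ ⟨b, y⟩ + M · min( λ_min(C − Σ_j y_j A_j), 0 ). -/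
/-!
Weak duality with a spectral shift. Put `S = C - ∑ⱼ yⱼ Aⱼ` and `μ = min (λ_min S) 0`. Then
`S - μ I` is positive semidefinite, and the trace of a product of two positive semidefinite
matrices is nonnegative, so `μ tr X ≤ tr (S X)`; as `μ ≤ 0`, `tr X ≤ M` gives `μ M ≤ tr (S X)`.
Finally the constraints `tr (Aⱼᵀ X) = bⱼ` turn `tr (Sᵀ X)` into `tr (Cᵀ X) - ⟨b, y⟩`.
-/

open Matrix

/-- The smallest eigenvalue of a real symmetric matrix (defined via the spectral
theorem; the value is irrelevant for non-Hermitian input). -/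
noncomputable def minEigenvalue {n : ℕ} (A : Matrix (Fin n) (Fin n) ℝ) : ℝ :=
  if h : A.IsHermitian then ⨅ i, h.eigenvalues i else 0

namespace Matrix

open scoped ComplexOrder

theorem trace_transpose_sub_sum_smul_mul {n m R : Type*} [Fintype n] [Fintype m] [CommRing R]
    (C X : Matrix n n R) (A : m → Matrix n n R) (y : m → R) :
    ((C - ∑ j, y j • A j)ᵀ * X).trace = (Cᵀ * X).trace - ∑ j, y j * ((A j)ᵀ * X).trace := by
  simp only [transpose_sub, transpose_sum, transpose_smul, Matrix.sub_mul, Finset.sum_mul,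
    smul_mul, trace_sub, trace_sum, trace_smul, smul_eq_mul]

variable {n 𝕜 : Type*} [Fintype n] [DecidableEq n] [RCLike 𝕜]

theorem PosSemidef.trace_mul_nonneg {P Q : Matrix n n 𝕜} (hP : P.PosSemidef)
    (hQ : Q.PosSemidef) : 0 ≤ (P * Q).trace := by
  obtain ⟨B, rfl⟩ : ∃ B : Matrix n n 𝕜, Q = Bᴴ * B := by
    open scoped MatrixOrder in
    exact CStarAlgebra.nonneg_iff_eq_star_mul_self.mp hQ.nonneg
  rw [← Matrix.mul_assoc, trace_mul_cycle]
  exact (hP.mul_mul_conjTranspose_same B).trace_nonneg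

theorem IsHermitian.posSemidef_sub_smul_one {S : Matrix n n 𝕜} (hS : S.IsHermitian) {μ : ℝ}
    (hμ : ∀ i, μ ≤ hS.eigenvalues i) : (S - μ • 1).PosSemidef := by
  open scoped MatrixOrder in
  rw [← Algebra.algebraMap_eq_smul_one, ← le_iff,
    algebraMap_le_iff_le_spectrum (R := ℝ) hS.isSelfAdjoint,
    hS.spectrum_real_eq_range_eigenvalues]
  rintro _ ⟨i, rfl⟩
  exact hμ i

theorem IsHermitian.mul_trace_le_trace_mul {S X : Matrix n n 𝕜} (hS : S.IsHermitian)
    (hX : X.PosSemidef) {μ : ℝ} (hμ : ∀ i, μ ≤ hS.eigenvalues i) :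
    (μ : 𝕜) * X.trace ≤ (S * X).trace := by
  have h := (hS.posSemidef_sub_smul_one hμ).trace_mul_nonneg hX
  rwa [Matrix.sub_mul, trace_sub, smul_mul, one_mul, trace_smul, sub_nonneg,
    RCLike.real_smul_eq_coe_mul] at h

end Matrix

theorem minEigenvalue_le_eigenvalues {n : ℕ} {S : Matrix (Fin n) (Fin n) ℝ}
    (hS : S.IsHermitian) (i : Fin n) : minEigenvalue S ≤ hS.eigenvalues i := by
  rw [minEigenvalue, dif_pos hS]
  exact ciInf_le (Set.finite_range _).bddBelow i

theorem sdp_suboptimality_lower_bound_general (n m : ℕ)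
    (C : Matrix (Fin n) (Fin n) ℝ) (A : Fin m → Matrix (Fin n) (Fin n) ℝ)
    (b : Fin m → ℝ) (hC : C.IsSymm) (hA : ∀ j, (A j).IsSymm)
    (M : ℝ) :
    ∀ (y : Fin m → ℝ) (X : Matrix (Fin n) (Fin n) ℝ), X.PosSemidef →
      (∀ j, Matrix.trace ((A j)ᵀ * X) = b j) → Matrix.trace X ≤ M →
      Matrix.trace (Cᵀ * X) ≥
        ∑ j, b j * y j + M * min (minEigenvalue (C - ∑ j, y j • A j)) 0 := by
  intro y X hX hfeas htr
  set S := C - ∑ j, y j • A j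
  have hS : S.IsHermitian := isHermitian_iff_isSymm.mpr <|
    hC.sub <| by simp only [IsSymm, transpose_sum, transpose_smul, (hA _).eq]
  set μ := min (minEigenvalue S) 0
  have hSX : μ * X.trace ≤ (S * X).trace := hS.mul_trace_le_trace_mul hX fun i =>
    (min_le_left _ _).trans (minEigenvalue_le_eigenvalues hS i)
  have hμM : μ * M ≤ μ * X.trace := mul_le_mul_of_nonpos_left htr (min_le_right _ _)
  have hLagrangian : (Sᵀ * X).trace = (Cᵀ * X).trace - ∑ j, b j * y j := by
    simp only [S, trace_transpose_sub_sum_smul_mul, hfeas, mul_comm]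
  rw [(isHermitian_iff_isSymm.mp hS).eq] at hLagrangian
  linarith

/-- A valid lower bound on the primal SDP objective computable from any dual vector
`y ∈ ℝᵐ`: if every primal feasible `X` has `trace(X) ≤ M`, then
`⟨C, X⟩ ≥ ⟨b, y⟩ + M · min(λ_min(C − Σ_j y_j A_j), 0)`. -/
theorem sdp_suboptimality_lower_bound (n m : ℕ) (hn : 1 ≤ n)
    (C : Matrix (Fin n) (Fin n) ℝ) (A : Fin m → Matrix (Fin n) (Fin n) ℝ)
    (b : Fin m → ℝ) (hC : C.IsSymm) (hA : ∀ j, (A j).IsSymm)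
    (M : ℝ) (hM : 0 ≤ M) :
    ∀ (y : Fin m → ℝ) (X : Matrix (Fin n) (Fin n) ℝ), X.PosSemidef →
      (∀ j, Matrix.trace ((A j)ᵀ * X) = b j) → Matrix.trace X ≤ M →
      Matrix.trace (Cᵀ * X) ≥
        ∑ j, b j * y j + M * min (minEigenvalue (C - ∑ j, y j • A j)) 0 :=
  sdp_suboptimality_lower_bound_general n m C A b hC hA M
end

section
/- Let X be a nonempty set, N a natural number, and g : Fin N → X → ℝ a family of functions with g_i(x) ≥ 0 for all i and all x ∈ X. Then the infimum over x ∈ X of Σ_i g_i(x)/(1 + g_i(x)) equals the infimum over pairs (x, θ) with x ∈ X and θ : Fin N → ℝ satisfying 0 ≤ θ_i ≤ 1 for all i, of Σ_i [ θ_i²·g_i(x) + (θ_i − 1)² ]. -/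
lemma gm_key (gv θ : ℝ) (hgv : 0 ≤ gv) :
    gv / (1 + gv) ≤ θ ^ 2 * gv + (θ - 1) ^ 2 := by
  have h1 : (0:ℝ) < 1 + gv := by linarith
  rw [div_le_iff₀ h1]
  nlinarith [sq_nonneg ((1 + gv) * θ - 1)]

lemma gm_eq (gv : ℝ) (hgv : 0 ≤ gv) :
    (1 / (1 + gv)) ^ 2 * gv + (1 / (1 + gv) - 1) ^ 2 = gv / (1 + gv) := by
  have h1 : (1:ℝ) + gv ≠ 0 := by linarith
  field_simp
  ring

/-- Reformulation of Geman-McClure (GM) robust estimation as a polynomial optimization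
problem: for nonnegative residual functions `g_i`, the infimum over `x ∈ X` of
`Σ_i g_i(x)/(1 + g_i(x))` equals the infimum over pairs `(x, θ)` with `θ_i ∈ [0,1]` of
`Σ_i [θ_i²·g_i(x) + (θ_i − 1)²]`. -/
theorem gm_pop_reformulation (X : Type*) [Nonempty X] (N : ℕ)
    (g : Fin N → X → ℝ) (hg : ∀ i, ∀ x : X, g i x ≥ 0) :
    sInf {y : ℝ | ∃ x : X, y = ∑ i : Fin N, g i x / (1 + g i x)} =
    sInf {y : ℝ | ∃ (x : X) (θ : Fin N → ℝ), (∀ i, 0 ≤ θ i ∧ θ i ≤ 1) ∧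
      y = ∑ i : Fin N, (θ i ^ 2 * g i x + (θ i - 1) ^ 2)} := by
  set A := {y : ℝ | ∃ x : X, y = ∑ i : Fin N, g i x / (1 + g i x)} with hA
  set B := {y : ℝ | ∃ (x : X) (θ : Fin N → ℝ), (∀ i, 0 ≤ θ i ∧ θ i ≤ 1) ∧
      y = ∑ i : Fin N, (θ i ^ 2 * g i x + (θ i - 1) ^ 2)} with hB
  obtain ⟨x₀⟩ := ‹Nonempty X›
  have hAne : A.Nonempty := ⟨_, ⟨x₀, rfl⟩⟩
  have hBne : B.Nonempty := ⟨_, ⟨x₀, fun _ => 0, fun i => ⟨le_refl 0, zero_le_one⟩, rfl⟩⟩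
  have hAbdd : BddBelow A := by
    refine ⟨0, fun y ⟨x, hx⟩ => ?_⟩
    subst hx
    apply Finset.sum_nonneg
    intro i _
    have := hg i x
    positivity
  have hBbdd : BddBelow B := by
    refine ⟨0, fun y ⟨x, θ, hθ, hx⟩ => ?_⟩
    subst hx
    apply Finset.sum_nonneg
    intro i _
    have := hg i x
    positivity
  apply le_antisymm
  · -- sInf A ≤ sInf B
    apply le_csInf hBne
    rintro b ⟨x, θ, hθ, rfl⟩
    refine csInf_le_of_le hAbdd ⟨x, rfl⟩ ?_
    apply Finset.sum_le_sum
    intro i _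
    exact gm_key (g i x) (θ i) (hg i x)
  · -- sInf B ≤ sInf A
    apply le_csInf hAne
    rintro a ⟨x, rfl⟩
    refine csInf_le hBbdd ⟨x, fun i => 1 / (1 + g i x), ?_, ?_⟩
    · intro i
      have h1 : (0:ℝ) < 1 + g i x := by linarith [hg i x]
      constructor
      · positivity
      · rw [div_le_one h1]; linarith [hg i x]
    · refine Finset.sum_congr rfl fun i _ => ?_
      exact (gm_eq (g i x) (hg i x)).symm
end
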